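/- Let F be a field of characteristic 2, let π be an anisotropic quasi-Pfister form over F, and let ψ be an anisotropic totally singular quadratic form over F such that π ⊆ ψ and nf_F(ψ) ≃ π ⊗ ⟪b⟫ for some b ∈ F×. Then there exists a totally singular quadratic form ρ over F with ρ ⊆ π such that ψ ≃ π ⊥ bρ. -/

import Mathlib

/-!
Diagonal quasilinear `p`-forms over a field `F` of characteristic `p`,
following Hoffmann and Zemková. A form of dimension `n` is recorded by its
coefficient tuple `a : ι → F` (for a finite index type `ι`), the form being
`x ↦ ∑ i, a i * (x i)^p`.
-/

universe u

namespace QLF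

open scoped BigOperators

/-- Evaluation of the diagonal quasilinear `p`-form with coefficients `a` at `x`. -/
def eval (p : ℕ) {F : Type*} [CommRing F] {ι : Type*} [Fintype ι]
    (a : ι → F) (x : ι → F) : F :=
  ∑ i, a i * x i ^ p

/-- A form is isotropic if it has a nontrivial zero. -/
def Isotropic (p : ℕ) {F : Type*} [CommRing F] {ι : Type*} [Fintype ι] (a : ι → F) : Prop :=
  ∃ x : ι → F, x ≠ 0 ∧ eval p a x = 0

/-- A form is anisotropic if it has no nontrivial zero. -/
def Anisotropic (p : ℕ) {F : Type*} [CommRing F] {ι : Type*} [Fintype ι] (a : ι → F) : Prop :=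
  ¬ Isotropic p a

/-- In characteristic `p`, the zero set of a diagonal quasilinear `p`-form is a
linear subspace. -/
def zeroSubmodule (p : ℕ) [Fact p.Prime] {F : Type*} [Field F] [CharP F p]
    {ι : Type*} [Fintype ι] (a : ι → F) : Submodule F (ι → F) where
  carrier := {x | eval p a x = 0}
  zero_mem' := by
    have hp : p ≠ 0 := (Fact.out : p.Prime).ne_zero
    simp [eval, zero_pow hp]
  add_mem' := by
    intro x y hx hy
    haveI : ExpChar F p := .prime Fact.out
    have hxy : eval p a (x + y) = eval p a x + eval p a y := by
      simp only [eval, Pi.add_apply]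
      rw [← Finset.sum_add_distrib]
      exact Finset.sum_congr rfl fun i _ => by rw [add_pow_char, mul_add]
    simp only [Set.mem_setOf_eq] at *
    rw [hxy, hx, hy, add_zero]
  smul_mem' := by
    intro c x hx
    simp only [Set.mem_setOf_eq] at *
    have hcx : eval p a (c • x) = c ^ p * eval p a x := by
      simp only [eval, Pi.smul_apply, smul_eq_mul, Finset.mul_sum]
      exact Finset.sum_congr rfl fun i _ => by rw [mul_pow]; ring
    rw [hcx, hx, mul_zero]

/-- The defect `i₀` of a form: the dimension of its zero set. -/
noncomputable def defect (p : ℕ) [Fact p.Prime] {F : Type*} [Field F] [CharP F p]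
    {ι : Type*} [Fintype ι] (a : ι → F) : ℕ :=
  Module.finrank F (zeroSubmodule p a)

/-- Isometry of forms: a linear bijection carrying one form into the other. -/
def Isometric (p : ℕ) {F : Type*} [Field F] {ι κ : Type*} [Fintype ι] [Fintype κ]
    (a : ι → F) (b : κ → F) : Prop :=
  ∃ T : (ι → F) ≃ₗ[F] (κ → F), ∀ x, eval p a x = eval p b (T x)

/-- `a` is a subform of `b`. -/
def Subform (p : ℕ) {F : Type*} [Field F] {ι κ : Type*} [Fintype ι] [Fintype κ]
    (a : ι → F) (b : κ → F) : Prop :=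
  ∃ T : (ι → F) →ₗ[F] (κ → F), Function.Injective T ∧ ∀ x, eval p a x = eval p b (T x)

/-- Similarity of forms: `a ≃ c·b` for some scalar `c ≠ 0`. -/
def Similar (p : ℕ) {F : Type*} [Field F] {ι κ : Type*} [Fintype ι] [Fintype κ]
    (a : ι → F) (b : κ → F) : Prop :=
  ∃ c : F, c ≠ 0 ∧ Isometric p a (fun i => c * b i)

/-- Vishik equivalence: same dimension, and equal defects over every field
extension `E/F`. -/
def VishikEquiv (p : ℕ) [Fact p.Prime] {F : Type u} [Field F] [CharP F p]
    {ι κ : Type*} [Fintype ι] [Fintype κ] (a : ι → F) (b : κ → F) : Prop :=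
  Fintype.card ι = Fintype.card κ ∧
    ∀ (E : Type u) [Field E] [CharP E p] (f : F →+* E),
      defect p (f ∘ a) = defect p (f ∘ b)

/-- Weak Vishik equivalence: same dimension, and equal defects over every field
extension of the shape `E = F(α)` with `αᵖ ∈ F` (this includes `E = F`). -/
def WeakVishikEquiv (p : ℕ) [Fact p.Prime] {F : Type u} [Field F] [CharP F p]
    {ι κ : Type*} [Fintype ι] [Fintype κ] (a : ι → F) (b : κ → F) : Prop :=
  Fintype.card ι = Fintype.card κ ∧
    ∀ (E : Type u) [Field E] [CharP E p] (f : F →+* E) (α : E),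
      α ^ p ∈ Set.range ⇑f →
      Subfield.closure (insert α (Set.range ⇑f)) = ⊤ →
      defect p (f ∘ a) = defect p (f ∘ b)

/-- The set `Fᵖ` of `p`-th powers. -/
def pSet (p : ℕ) (F : Type*) [Field F] : Set F := Set.range fun x : F => x ^ p

/-- The subfield `Fᵖ` of `p`-th powers (in characteristic `p` the set of `p`-th
powers is already a subfield, so the closure adds nothing). -/
def pthSubfield (p : ℕ) (F : Type*) [Field F] : Subfield F :=
  Subfield.closure (pSet p F)

/-- The subfield `Fᵖ(s)` generated by a set `s` over `Fᵖ`. -/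
def adjoin (p : ℕ) {F : Type*} [Field F] (s : Set F) : Subfield F :=
  Subfield.closure (pSet p F ∪ s)

/-- The degree `[N : k]` of a subfield `N` over a subfield `k` (for `k ≤ N`,
the `k`-span of `N` in `F` is `N` itself, so this is the `k`-dimension of `N`). -/
noncomputable def degOver {F : Type*} [Field F] (k : Subfield F) (N : Subfield F) : ℕ :=
  Module.finrank k (Submodule.span k (N : Set F))

/-- The set `D_F(φ)` of values of the form. -/
def values (p : ℕ) {F : Type*} [CommRing F] {ι : Type*} [Fintype ι] (a : ι → F) : Set F :=
  Set.range (eval p a)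

/-- The norm field `N_F(φ)`: the subfield generated over `Fᵖ` by all quotients
of nonzero values of `φ`. -/
def normField (p : ℕ) {F : Type*} [Field F] {ι : Type*} [Fintype ι] (a : ι → F) : Subfield F :=
  adjoin p {z : F | ∃ u ∈ values p a, ∃ v ∈ values p a, u ≠ 0 ∧ v ≠ 0 ∧ z = u / v}

/-- The norm degree `ndeg_F(φ) = [N_F(φ) : Fᵖ]`. -/
noncomputable def ndeg (p : ℕ) {F : Type*} [Field F] {ι : Type*} [Fintype ι] (a : ι → F) : ℕ :=
  degOver (pthSubfield p F) (normField p a)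

/-- An anisotropic form is minimal if `ndeg_F(φ) = p^(dim φ - 1)`. -/
def Minimal (p : ℕ) {F : Type*} [Field F] {ι : Type*} [Fintype ι] (a : ι → F) : Prop :=
  Anisotropic p a ∧ ndeg p a = p ^ (Fintype.card ι - 1)

/-- The quasi-Pfister form `⟪b₁,…,bₙ⟫`: its coefficients are all products
`b₁^{e₁}⋯bₙ^{eₙ}` with `0 ≤ eᵢ ≤ p-1`. -/
def pfister (p : ℕ) {F : Type*} [CommRing F] {n : ℕ} (b : Fin n → F) :
    (Fin n → Fin p) → F :=
  fun e => ∏ i, b i ^ (e i : ℕ)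

/-- A form is a quasi-Pfister form if it is isometric to some `⟪b₁,…,bₙ⟫`
with all `bᵢ ∈ F×`. -/
def IsQuasiPfister (p : ℕ) {F : Type*} [Field F] {ι : Type*} [Fintype ι] (a : ι → F) : Prop :=
  ∃ (n : ℕ) (b : Fin n → F), (∀ i, b i ≠ 0) ∧ Isometric p a (pfister p b)

/-- `a` is a quasi-Pfister neighbor of the form `π`: `c·a ⊆ π` for some `c ≠ 0`
and `p · dim a > dim π`. -/
def IsNeighborOf (p : ℕ) {F : Type*} [Field F] {ι κ : Type*} [Fintype ι] [Fintype κ]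
    (a : ι → F) (π : κ → F) : Prop :=
  ∃ c : F, c ≠ 0 ∧ Subform p (fun i => c * a i) π ∧ p * Fintype.card ι > Fintype.card κ

/-- `a` is a quasi-Pfister neighbor (of some quasi-Pfister form). -/
def IsQPNeighbor (p : ℕ) {F : Type*} [Field F] {ι : Type*} [Fintype ι] (a : ι → F) : Prop :=
  ∃ (n : ℕ) (b : Fin n → F), (∀ i, b i ≠ 0) ∧ IsNeighborOf p a (pfister p b)

/-- `a` is a quasi-Pfister neighbor of codimension one of some anisotropic
quasi-Pfister form: `dim π - dim a = 1`. -/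
def IsQPNeighborCodimOne (p : ℕ) {F : Type*} [Field F] {ι : Type*} [Fintype ι]
    (a : ι → F) : Prop :=
  ∃ (n : ℕ) (b : Fin n → F), (∀ i, b i ≠ 0) ∧ Anisotropic p (pfister p b) ∧
    IsNeighborOf p a (pfister p b) ∧ Fintype.card ι + 1 = p ^ n

/-- Tensor product of diagonal forms: coefficients `aᵢ · bⱼ`. -/
def tensor (p : ℕ) {F : Type*} [CommRing F] {ι κ : Type*}
    (a : ι → F) (b : κ → F) : ι × κ → F :=
  fun ik => a ik.1 * b ik.2

/-- The set `G_F(φ) = {x ∈ F× : xφ ≃ φ} ∪ {0}` of similarity factors. -/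
def simFactors (p : ℕ) {F : Type*} [Field F] {ι : Type*} [Fintype ι] (a : ι → F) : Set F :=
  {x | x ≠ 0 ∧ Isometric p (fun i => x * a i) a} ∪ {0}

/-- `b` is the anisotropic part of `a`: `b` is anisotropic and
`a ≃ b ⊥ (m × ⟨0⟩)` for some `m`. -/
def IsAnisotropicPart (p : ℕ) {F : Type*} [Field F] {ι κ : Type*} [Fintype ι] [Fintype κ]
    (a : ι → F) (b : κ → F) : Prop :=
  Anisotropic p b ∧ ∃ m : ℕ, Isometric p a (Sum.elim b fun _ : Fin m => (0 : F))

/-- `⟪c₁,…,cₘ⟫` is (a representative of) the norm form of `a`: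
`N_F(a) = Fᵖ(c₁,…,cₘ)` and `ndeg_F(a) = pᵐ`. -/
def IsNormForm (p : ℕ) {F : Type*} [Field F] {ι : Type*} [Fintype ι] (a : ι → F)
    {m : ℕ} (c : Fin m → F) : Prop :=
  normField p a = adjoin p (Set.range c) ∧ ndeg p a = p ^ m

end QLF

/-!
Since `π ⊆ ψ` and `1` is a value of `π`, every value of `ψ` lies in the norm field `N(ψ)`. The
value set of a quasi-Pfister form `⟪c₁,…,cₘ⟫` is the `Fᵖ`-span of its coefficients; it is closed
under products, so it is the field `Fᵖ(c₁,…,cₘ)`. Hence `N(ψ)` is the value set of the norm form,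
and `ndeg ψ = pᵐ` makes the coefficients of the norm form `Fᵖ`-linearly independent, i.e. the norm
form, and with it `π ⊗ ⟪b⟫ ≃ π ⊥ bπ`, is anisotropic. So `D(ψ) ⊆ D(π) + b D(π)`.

On the subspace `Z = {x | ψ(x) ∈ b D(π)}`, a basis `zⱼ` with `ψ(zⱼ) = b π(wⱼ)` diagonalises `ψ` as
`bρ` with `ρ = ⟨π(w₁),…,π(wₛ)⟩ ⊆ π`. If `T` embeds `π` into `ψ` and `ψ(v) = π(y) + b π(z)`, then
`v - T y ∈ Z`; so `(y, x) ↦ T y + ∑ xⱼ zⱼ` is an isometry `π ⊥ bρ → ψ` that is onto, and it is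
injective because `π ⊥ bπ` is anisotropic.
-/

namespace QLF

open Submodule

variable {p n : ℕ} {ι κ : Type*} [Fintype ι] [Fintype κ]

section CommRing

variable {R : Type*} [CommRing R]

theorem eval_smul (a : ι → R) (c : R) (x : ι → R) : eval p a (c • x) = c ^ p * eval p a x := by
  simp only [eval, Pi.smul_apply, smul_eq_mul, mul_pow, Finset.mul_sum]
  exact Finset.sum_congr rfl fun i _ => by ring

theorem eval_mul_left (a : ι → R) (c : R) (x : ι → R) :
    eval p (fun i => c * a i) x = c * eval p a x := by
  simp only [eval, Finset.mul_sum, mul_assoc]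

theorem eval_sum_elim (a : ι → R) (c : κ → R) (x : ι ⊕ κ → R) :
    eval p (Sum.elim a c) x = eval p a (x ∘ Sum.inl) + eval p c (x ∘ Sum.inr) := by
  simp [eval, Fintype.sum_sum_type]

theorem Anisotropic.eq_zero {a : ι → R} (h : Anisotropic p a) {x : ι → R}
    (hx : eval p a x = 0) : x = 0 :=
  not_not.mp fun hx0 => h ⟨x, hx0, hx⟩

theorem Anisotropic.eq_zero_of_eval_add_eval_eq_zero {a : ι → R} {c : κ → R}
    (h : Anisotropic p (Sum.elim a c)) {y : ι → R} {z : κ → R}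
    (hyz : eval p a y + eval p c z = 0) : y = 0 ∧ z = 0 := by
  have := h.eq_zero (x := Sum.elim y z) (by rwa [eval_sum_elim])
  exact ⟨by simpa using congrArg (· ∘ Sum.inl) this, by simpa using congrArg (· ∘ Sum.inr) this⟩

theorem pfister_zero [NeZero p] (d : Fin n → R) : pfister p d 0 = 1 := by
  simp [pfister]

theorem pfister_single [Fact (1 < p)] (d : Fin n → R) (i : Fin n) :
    pfister p d (Pi.single i 1) = d i := by
  rw [pfister, Finset.prod_eq_single i (fun j _ hj => by simp [hj]) (by simp)]
  simp [Nat.mod_eq_of_lt (Fact.out : 1 < p)]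

theorem pfister_mul_pfister (d : Fin n → R) (e f : Fin n → Fin p) :
    pfister p d e * pfister p d f = (∏ i, d i ^ ((e i + f i : ℕ) / p)) ^ p * pfister p d (e + f) := by
  simp only [pfister, ← Finset.prod_mul_distrib, ← Finset.prod_pow]
  refine Finset.prod_congr rfl fun i _ => ?_
  rw [← pow_add, ← pow_mul', ← pow_add, Pi.add_apply, Fin.val_add, Nat.div_add_mod]

variable [ExpChar R p]

theorem eval_zero (a : ι → R) : eval p a 0 = 0 := by
  simp [eval, zero_pow (expChar_pos R p).ne']

theorem eval_add (a x y : ι → R) : eval p a (x + y) = eval p a x + eval p a y := by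
  simp only [eval, Pi.add_apply, add_pow_expChar, mul_add, Finset.sum_add_distrib]

theorem eval_sub (a x y : ι → R) : eval p a (x - y) = eval p a x - eval p a y := by
  simp only [eval, Pi.sub_apply, sub_pow_expChar, mul_sub, Finset.sum_sub_distrib]

theorem eval_linearCombination (a : ι → R) (v : κ → ι → R) (x : κ → R) :
    eval p a (Fintype.linearCombination R v x) = eval p (fun j => eval p a (v j)) x := by
  simp only [eval, Fintype.linearCombination_apply, Finset.sum_apply, Pi.smul_apply, smul_eq_mul,
    sum_pow_char, mul_pow, Finset.mul_sum]
  rw [Finset.sum_comm]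
  exact Finset.sum_congr rfl fun j _ => by
    rw [Finset.sum_mul]
    exact Finset.sum_congr rfl fun i _ => by ring

end CommRing

variable {F : Type*} [Field F]

theorem Isometric.symm {a : ι → F} {b : κ → F} (h : Isometric p a b) : Isometric p b a :=
  let ⟨T, hT⟩ := h
  ⟨T.symm, fun y => by rw [hT, T.apply_symm_apply]⟩

theorem Isometric.trans {ι' : Type*} [Fintype ι'] {a : ι → F} {b : κ → F} {c : ι' → F}
    (hab : Isometric p a b) (hbc : Isometric p b c) : Isometric p a c :=
  let ⟨T, hT⟩ := hab
  let ⟨T', hT'⟩ := hbc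
  ⟨T.trans T', fun x => (hT x).trans (hT' (T x))⟩

theorem Isometric.values_eq {a : ι → F} {b : κ → F} (h : Isometric p a b) :
    values p a = values p b := by
  obtain ⟨T, hT⟩ := h
  ext u
  exact ⟨fun ⟨x, hx⟩ => ⟨T x, (hT x) ▸ hx⟩,
    fun ⟨y, hy⟩ => ⟨T.symm y, by rw [hT, T.apply_symm_apply, hy]⟩⟩

theorem Isometric.anisotropic {a : ι → F} {b : κ → F} (h : Isometric p a b)
    (ha : Anisotropic p a) : Anisotropic p b := by
  obtain ⟨T, hT⟩ := h.symm
  rintro ⟨y, hy0, hy⟩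
  exact ha ⟨T y, by simpa using hy0, by rw [← hT, hy]⟩

theorem isometric_comp_equiv (a : ι → F) (e : κ ≃ ι) : Isometric p (a ∘ e) a :=
  ⟨LinearEquiv.funCongrLeft F F e.symm, fun x => by
    simp [eval, ← e.sum_comp, LinearMap.funLeft_apply]⟩

theorem Subform.values_subset {a : ι → F} {b : κ → F} (h : Subform p a b) :
    values p a ⊆ values p b := by
  obtain ⟨T, -, hT⟩ := h
  rintro _ ⟨x, rfl⟩
  exact ⟨T x, (hT x).symm⟩

theorem values_subset_normField {a : ι → F} (h : (1 : F) ∈ values p a) :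
    values p a ⊆ normField p a := by
  intro u hu
  rcases eq_or_ne u 0 with rfl | hu0
  · exact zero_mem _
  · exact Subfield.subset_closure (Or.inr ⟨u, hu, 1, h, hu0, one_ne_zero, (div_one u).symm⟩)

theorem pow_mem_pthSubfield (y : F) : y ^ p ∈ pthSubfield p F :=
  Subfield.subset_closure ⟨y, rfl⟩

theorem one_mem_span_pfister [NeZero p] (d : Fin n → F) :
    (1 : F) ∈ span (pthSubfield p F) (Set.range (pfister p d)) :=
  subset_span ⟨0, pfister_zero d⟩

theorem mul_mem_span_pfister (d : Fin n → F) {u v : F}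
    (hu : u ∈ span (pthSubfield p F) (Set.range (pfister p d)))
    (hv : v ∈ span (pthSubfield p F) (Set.range (pfister p d))) :
    u * v ∈ span (pthSubfield p F) (Set.range (pfister p d)) := by
  have huv := mul_mem_mul hu hv
  rw [span_mul_span] at huv
  refine span_le.2 ?_ huv
  rintro _ ⟨_, ⟨e, rfl⟩, _, ⟨f, rfl⟩, rfl⟩
  dsimp only
  rw [pfister_mul_pfister]
  exact smul_mem _ (⟨_, pow_mem_pthSubfield _⟩ : pthSubfield p F) (subset_span ⟨e + f, rfl⟩)

section ExpChar

variable [ExpChar F p]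

theorem pthSubfield_eq_fieldRange_frobenius : pthSubfield p F = (frobenius F p).fieldRange := by
  rw [pthSubfield, ← Subfield.closure_eq (frobenius F p).fieldRange, RingHom.coe_fieldRange]
  rfl

theorem mem_pthSubfield_iff {x : F} : x ∈ pthSubfield p F ↔ ∃ y, y ^ p = x := by
  rw [pthSubfield_eq_fieldRange_frobenius, RingHom.mem_fieldRange]
  rfl

theorem values_eq_span (a : ι → F) :
    values p a = span (pthSubfield p F) (Set.range a) := by
  ext u
  rw [SetLike.mem_coe, mem_span_range_iff_exists_fun]
  constructor
  · rintro ⟨x, rfl⟩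
    exact ⟨fun i => ⟨x i ^ p, pow_mem_pthSubfield (x i)⟩,
      Finset.sum_congr rfl fun i _ => by rw [Subfield.smul_def, smul_eq_mul, mul_comm]⟩
  · rintro ⟨t, rfl⟩
    choose y hy using fun i => mem_pthSubfield_iff.1 (t i).2
    exact ⟨y, Finset.sum_congr rfl fun i _ => by rw [hy, Subfield.smul_def, smul_eq_mul, mul_comm]⟩

theorem anisotropic_of_linearIndependent {a : ι → F}
    (h : LinearIndependent (pthSubfield p F) a) : Anisotropic p a := by
  rintro ⟨x, hx0, hx⟩
  refine hx0 (funext fun i => pow_eq_zero_iff (expChar_pos F p).ne' |>.1 ?_)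
  have := Fintype.linearIndependent_iff.1 h (fun i => ⟨x i ^ p, pow_mem_pthSubfield (x i)⟩)
    (by simpa [eval, Subfield.smul_def, mul_comm] using hx) i
  simpa using congrArg Subtype.val this

variable (p) in
def preimageValues (ψ : κ → F) (a : ι → F) : Submodule F (κ → F) where
  carrier := {x | eval p ψ x ∈ values p a}
  zero_mem' := ⟨0, by rw [eval_zero, eval_zero]⟩
  add_mem' := by
    rintro x x' ⟨y, hy⟩ ⟨y', hy'⟩
    exact ⟨y + y', by rw [eval_add, eval_add, hy, hy']⟩
  smul_mem' := by
    rintro c x ⟨y, hy⟩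
    exact ⟨c • y, by rw [eval_smul, eval_smul, hy]⟩

theorem exists_subform_parametrizing_preimageValues {ψ : κ → F} (hψ : Anisotropic p ψ) (φ : ι → F) (b : F) :
    ∃ (s : ℕ) (ρ : Fin s → F) (L : (Fin s → F) →ₗ[F] (κ → F)), Subform p ρ φ ∧
      LinearMap.range L = preimageValues p ψ (fun i => b * φ i) ∧
      ∀ x, eval p ψ (L x) = b * eval p ρ x := by
  set Z := preimageValues p ψ fun i => b * φ i
  let B := Module.finBasis F Z
  choose w hw using fun j => (B j).2
  let L := Z.subtype ∘ₗ B.equivFun.symm.toLinearMap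
  let U := Fintype.linearCombination F w
  have hL : ∀ x, eval p ψ (L x) = b * eval p φ (U x) := by
    intro x
    have hLx : L x = Fintype.linearCombination F (fun j => (B j : κ → F)) x := by
      simp [L, Module.Basis.equivFun_symm_apply, Fintype.linearCombination_apply]
    rw [hLx, eval_linearCombination, eval_linearCombination, ← eval_mul_left]
    congr 1
    funext j
    rw [← hw j, eval_mul_left]
  have hU : Function.Injective U := by
    refine (injective_iff_map_eq_zero U).2 fun x hx => ?_
    have hLx : L x = 0 := hψ.eq_zero (by rw [hL, hx, eval_zero, mul_zero])
    exact (Subtype.val_injective.comp B.equivFun.symm.injective) (hLx.trans (map_zero L).symm)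
  refine ⟨_, fun j => eval p φ (w j), L, ⟨U, hU, fun x => (eval_linearCombination φ w x).symm⟩,
    ?_, fun x => by rw [hL, eval_linearCombination]⟩
  rw [LinearMap.range_comp_of_range_eq_top _ (LinearEquiv.range _), Submodule.range_subtype]

theorem exists_isometric_sum_elim_of_subform {φ : ι → F} {ψ : κ → F} {b : F}
    (hsub : Subform p φ ψ) (hψ : Anisotropic p ψ)
    (horth : Anisotropic p (Sum.elim φ fun i => b * φ i))
    (hval : values p ψ ⊆ values p (Sum.elim φ fun i => b * φ i)) :
    ∃ (s : ℕ) (ρ : Fin s → F), Subform p ρ φ ∧ Isometric p ψ (Sum.elim φ fun j => b * ρ j) := by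
  obtain ⟨T, -, hT⟩ := hsub
  obtain ⟨s, ρ, L, ⟨U, hU, hρ⟩, hLrange, hL⟩ := exists_subform_parametrizing_preimageValues hψ φ b
  let S := T ∘ₗ LinearMap.funLeft F F Sum.inl + L ∘ₗ LinearMap.funLeft F F Sum.inr
  have hSapply : ∀ u, S u = T (u ∘ Sum.inl) + L (u ∘ Sum.inr) := fun _ => rfl
  have hS : ∀ u, eval p (Sum.elim φ fun j => b * ρ j) u = eval p ψ (S u) := fun u => by
    rw [hSapply, eval_add, eval_sum_elim, eval_mul_left, hT, hL]
  have hinj : Function.Injective S := by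
    refine (injective_iff_map_eq_zero S).2 fun u hu => ?_
    have h0 : eval p φ (u ∘ Sum.inl) + eval p (fun i => b * φ i) (U (u ∘ Sum.inr)) = 0 := by
      rw [eval_mul_left, ← hρ, ← eval_mul_left, ← eval_sum_elim, hS, hu, eval_zero]
    obtain ⟨hl, hr⟩ := horth.eq_zero_of_eval_add_eval_eq_zero h0
    rw [← Sum.elim_comp_inl_inr u, hl, (injective_iff_map_eq_zero U).1 hU _ hr]
    exact Sum.elim_zero_zero
  have hsurj : Function.Surjective S := by
    intro v
    obtain ⟨y, hy⟩ := hval ⟨v, rfl⟩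
    rw [eval_sum_elim] at hy
    have hmem : v - T (y ∘ Sum.inl) ∈ LinearMap.range L := by
      rw [hLrange]
      exact ⟨y ∘ Sum.inr, by rw [eval_sub, ← hT, ← hy, add_sub_cancel_left]⟩
    obtain ⟨x, hx⟩ := hmem
    refine ⟨Sum.elim (y ∘ Sum.inl) x, ?_⟩
    rw [hSapply, Sum.elim_comp_inl, Sum.elim_comp_inr, hx, add_sub_cancel]
  let e := LinearEquiv.ofBijective S ⟨hinj, hsurj⟩
  refine ⟨s, ρ, ⟨U, hU, hρ⟩, e.symm, fun v => ?_⟩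
  conv_lhs => rw [← e.apply_symm_apply v]
  exact (hS _).symm

end ExpChar

section Pfister

variable [Fact p.Prime] [CharP F p]

theorem one_mem_values_pfister (d : Fin n → F) : (1 : F) ∈ values p (pfister p d) := by
  rw [values_eq_span]
  exact one_mem_span_pfister d

theorem coe_adjoin_range_eq_values_pfister (d : Fin n → F) :
    (adjoin p (Set.range d) : Set F) = values p (pfister p d) := by
  refine Set.Subset.antisymm (fun x hx => ?_) ?_
  · let V := (span (pthSubfield p F) (Set.range (pfister p d))).toSubalgebra
      (one_mem_span_pfister d) fun _ _ => mul_mem_span_pfister d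
    rw [values_eq_span]
    change x ∈ V
    induction hx using Subfield.closure_induction with
    | mem x hx =>
      rcases hx with ⟨y, rfl⟩ | ⟨i, rfl⟩
      · exact V.algebraMap_mem ⟨y ^ p, pow_mem_pthSubfield y⟩
      · rw [← pfister_single (p := p) d i]
        exact subset_span ⟨_, rfl⟩
    | one => exact V.one_mem
    | add _ _ _ _ hx hy => exact V.add_mem hx hy
    | neg _ _ hx => exact V.neg_mem hx
    | mul _ _ _ _ hx hy => exact V.mul_mem hx hy
    | inv x _ hx =>
      rcases eq_or_ne x 0 with rfl | hx0
      · simp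
      have hinv : x⁻¹ = (x⁻¹) ^ p * x ^ (p - 1) := by
        rw [inv_pow, ← div_eq_inv_mul, eq_div_iff (pow_ne_zero _ hx0),
          ← mul_pow_sub_one (Fact.out : p.Prime).ne_zero, inv_mul_cancel_left₀ hx0]
      rw [hinv]
      exact V.smul_mem (V.pow_mem hx _) ⟨_, pow_mem_pthSubfield _⟩
  · rintro _ ⟨x, rfl⟩
    refine sum_mem fun e _ => mul_mem (prod_mem fun i _ => pow_mem ?_ _) ?_
    · exact Subfield.subset_closure (Or.inr ⟨i, rfl⟩)
    · exact Subfield.subset_closure (Or.inl ⟨x e, rfl⟩)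

theorem IsNormForm.coe_normField {a : ι → F} {c : Fin n → F} (h : IsNormForm p a c) :
    (normField p a : Set F) = values p (pfister p c) := by
  rw [h.1, coe_adjoin_range_eq_values_pfister]

theorem IsNormForm.anisotropic {a : ι → F} {c : Fin n → F} (h : IsNormForm p a c) :
    Anisotropic p (pfister p c) := by
  apply anisotropic_of_linearIndependent
  rw [linearIndependent_iff_card_eq_finrank_span, Fintype.card_fun, Fintype.card_fin,
    Fintype.card_fin, ← h.2, ndeg, degOver, h.coe_normField, values_eq_span, span_eq]
  rfl

end Pfister

theorem isometric_tensor_pfister_one (a : ι → F) (b : F) :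
    Isometric 2 (tensor 2 a (pfister 2 fun _ : Fin 1 => b)) (Sum.elim a fun i => b * a i) := by
  let e : ι ⊕ ι ≃ ι × (Fin 1 → Fin 2) := (Equiv.boolProdEquivSum ι).symm.trans <|
    (Equiv.prodComm _ _).trans <| (Equiv.refl ι).prodCongr <|
      finTwoEquiv.symm.trans (Equiv.funUnique (Fin 1) (Fin 2)).symm
  have he : tensor 2 a (pfister 2 fun _ : Fin 1 => b) ∘ e = Sum.elim a fun i => b * a i := by
    funext i
    rcases i with i | i <;> simp [e, tensor, pfister, finTwoEquiv, mul_comm]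
  exact he ▸ (isometric_comp_equiv _ e).symm

end QLF

theorem stmt_10_general {F : Type u} [Field F] [CharP F 2]
    {r m : ℕ} (πc : Fin r → F)
    (ψ : Fin m → F) (hψan : QLF.Anisotropic 2 ψ)
    (hsub : QLF.Subform 2 (QLF.pfister 2 πc) ψ)
    (b : F)
    (hnf : ∃ (k : ℕ) (c : Fin k → F), QLF.IsNormForm 2 ψ c ∧
      QLF.Isometric 2 (QLF.pfister 2 c)
        (QLF.tensor 2 (QLF.pfister 2 πc) (QLF.pfister 2 fun _ : Fin 1 => b))) :
    ∃ (s : ℕ) (ρ : Fin s → F), QLF.Subform 2 ρ (QLF.pfister 2 πc) ∧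
      QLF.Isometric 2 ψ (Sum.elim (QLF.pfister 2 πc) fun j => b * ρ j) := by
  obtain ⟨_, c, hc, hiso⟩ := hnf
  have hπb := hiso.trans (QLF.isometric_tensor_pfister_one (QLF.pfister 2 πc) b)
  refine QLF.exists_isometric_sum_elim_of_subform hsub hψan (hπb.anisotropic hc.anisotropic) ?_
  rw [← hπb.values_eq, ← hc.coe_normField]
  exact QLF.values_subset_normField (hsub.values_subset (QLF.one_mem_values_pfister πc))

/-- Characteristic 2. Let `π` be an anisotropic quasi-Pfister form
and `ψ` an anisotropic totally singular quadratic form with `π ⊆ ψ` and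
`nf_F(ψ) ≃ π ⊗ ⟪b⟫` for some `b ∈ F×`. Then there is a form `ρ ⊆ π` with
`ψ ≃ π ⊥ bρ`. -/
theorem stmt_10 {F : Type u} [Field F] [CharP F 2]
    {r m : ℕ} (πc : Fin r → F) (hπc : ∀ i, πc i ≠ 0)
    (hπan : QLF.Anisotropic 2 (QLF.pfister 2 πc))
    (ψ : Fin m → F) (hψan : QLF.Anisotropic 2 ψ)
    (hsub : QLF.Subform 2 (QLF.pfister 2 πc) ψ)
    (b : F) (hb : b ≠ 0)
    (hnf : ∃ (k : ℕ) (c : Fin k → F), QLF.IsNormForm 2 ψ c ∧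
      QLF.Isometric 2 (QLF.pfister 2 c)
        (QLF.tensor 2 (QLF.pfister 2 πc) (QLF.pfister 2 fun _ : Fin 1 => b))) :
    ∃ (s : ℕ) (ρ : Fin s → F), QLF.Subform 2 ρ (QLF.pfister 2 πc) ∧
      QLF.Isometric 2 ψ (Sum.elim (QLF.pfister 2 πc) fun j => b * ρ j) :=
  stmt_10_general πc ψ hψan hsub b hnf
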